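/- arXiv:1812.07061 — 3 statements merged into one kernel-verified Lean document; each statement's English description precedes it below -/
import Mathlib

section
/- Let t, x1, v, α, β be rational numbers and set X1 = t + x1, X2 = t - x1, X3 = α·t, Y1 = t + v, Y2 = t - v, Y3 = β·t. If v^2 = ((2 + α^5)/6)·t^4 + ((20·x1^2 - 2 - β^3)/6)·t^2 + (5·x1^4)/3, then X1^5 + X2^5 + X3^5 = Y1^3 + Y2^3 + Y3^3. -/
theorem stmt_2 (t x1 v α β : ℚ)
    (h : v^2 = ((2 + α^5)/6)*t^4 + ((20*x1^2 - 2 - β^3)/6)*t^2 + (5*x1^4)/3) :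
    (t + x1)^5 + (t - x1)^5 + (α*t)^5 = (t + v)^3 + (t - v)^3 + (β*t)^3 := by linear_combination (-6*t)*h
end

section
/- For every rational number k with 2k^2 - 1 ≠ 0, the identity 3·((2k^2+1)/(2k^2-1))^5 = ((4k^4-4k^3-2k-1)/(2k^2-1)^2)^3 + ((4k^4+4k^3+2k-1)/(2k^2-1)^2)^3 + ((2k^2+1)/(2k^2-1))^3 holds. -/
theorem stmt_15 (k : ℚ) (hk : 2*k^2 - 1 ≠ 0) :
    3*((2*k^2+1)/(2*k^2-1))^5 =
      ((4*k^4-4*k^3-2*k-1)/(2*k^2-1)^2)^3 +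
      ((4*k^4+4*k^3+2*k-1)/(2*k^2-1)^2)^3 +
      ((2*k^2+1)/(2*k^2-1))^3 := by
  field_simp
  ring
end

section
/- For every rational number k with 3k^2 - 1 ≠ 0, the identity 2·((3k^2+1)/(3k^2-1))^5 = ((9k^4-6k^3-2k-1)/(3k^2-1)^2)^3 + ((9k^4+6k^3+2k-1)/(3k^2-1)^2)^3 holds. -/
theorem stmt_17 (k : ℚ) (hk : 3*k^2 - 1 ≠ 0) :
    2*((3*k^2+1)/(3*k^2-1))^5 =
      ((9*k^4-6*k^3-2*k-1)/(3*k^2-1)^2)^3 +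
      ((9*k^4+6*k^3+2*k-1)/(3*k^2-1)^2)^3 := by
  field_simp
  ring
end
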